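/- Let G and H be simple partially ordered abelian groups with order units u and v. Then (G ⊗ H, (G ⊗ H)₊, u ⊗ v), where (G⊗H)₊ = {a ∈ G⊗H : (s₁⊗s₂)(a) > 0 for all states s₁ ∈ S_u(G), s₂ ∈ S_v(H)} ∪ {0}, is a partially ordered abelian group with order unit u ⊗ v; that is: G⊗H = (G⊗H)₊ − (G⊗H)₊, (G⊗H)₊ ∩ (−(G⊗H)₊) = {0}, and for every a ∈ G⊗H there is a natural number m with m(u⊗v) − a ∈ (G⊗H)₊. -/

import Mathlib

/-!
A partially ordered abelian group with a nonzero order unit `u` has a state: the map `k • u ↦ k`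
is positive on `ℤ ∙ u`, and a positive partial homomorphism into `ℝ` whose domain contains an
order unit extends positively one generator at a time (an integral M. Riesz extension, closed off
by Zorn's lemma). If `u = 0`, the group is trivial.

For `a ∈ G ⊗ H`, writing `a` as a sum of elementary tensors and using `|s g| ≤ n` whenever
`± g ≤ n • u` bounds `(s ⊗ t) a` uniformly over all pairs of states. So `m • (u ⊗ v) - a` is
strictly positive on every `s ⊗ t` for large `m`: this is the order unit property, and applied
to `-a` it writes `a` as a difference of positive elements. Finally a single pair of states
separates `a` from `-a` unless `a = 0`.
-/

/-- A state on a partially ordered abelian group with positive cone `P` and order unit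
`u` is a positive additive homomorphism into `ℝ` normalized at `u`. -/
def IsState {G : Type*} [AddCommGroup G] (P : Set G) (u : G) (s : G →+ ℝ) : Prop :=
  (∀ x ∈ P, 0 ≤ s x) ∧ s u = 1

/-- The tensor product `s₁ ⊗ s₂ : G ⊗ H → ℝ` of two real-valued additive maps. -/
noncomputable def tensorState {G H : Type*} [AddCommGroup G] [AddCommGroup H]
    (s : G →+ ℝ) (t : H →+ ℝ) : TensorProduct ℤ G H →+ ℝ :=
  ((LinearMap.mul' ℤ ℝ).comp
    (TensorProduct.map s.toIntLinearMap t.toIntLinearMap)).toAddMonoidHom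

/-- The positive cone on `G ⊗ H`: `{0}` together with the elements on which every
tensor product of states is strictly positive. -/
def tensorCone {G H : Type*} [AddCommGroup G] [AddCommGroup H]
    (P : Set G) (u : G) (Q : Set H) (v : H) : Set (TensorProduct ℤ G H) :=
  {0} ∪ {x | ∀ s t, IsState P u s → IsState Q v t → 0 < tensorState s t x}

open Submodule

namespace LinearPMap

theorem exists_extension_sup_span_singleton {R E F : Type*} [CommRing R] [AddCommGroup E]
    [Module R E] [AddCommGroup F] [Module R F] (f : E →ₗ.[R] F) (y : E) (c : F)
    (h : ∀ (x : f.domain) (k : R), (x : E) + k • y = 0 → f x + k • c = 0) :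
    ∃ g : E →ₗ.[R] F, f ≤ g ∧ g.domain = f.domain ⊔ R ∙ y ∧
      ∀ (x : f.domain) (k : R) (z : g.domain), (x : E) + k • y = z → g z = f x + k • c := by
  have hc : ∀ k : R, k • y = 0 → (RingHom.id R) k • c = 0 := fun k hk ↦ by
    simpa using h 0 k (by simpa using hk)
  set l := mkSpanSingleton' y c hc
  have compat : ∀ (x : f.domain) (z : l.domain), (x : E) = z → f x = l z := by
    rintro x ⟨z, hz⟩ hxz
    obtain ⟨k, rfl⟩ := mem_span_singleton.1 hz
    have := h (-x) k (by simp [hxz])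
    rw [f.map_neg, neg_add_eq_zero] at this
    rw [mkSpanSingleton'_apply, RingHom.id_apply, this]
  refine ⟨f.sup l compat, f.left_le_sup l compat, rfl, fun x k z hz ↦ ?_⟩
  rw [sup_apply compat x ⟨k • y, smul_mem _ k (mem_span_singleton_self y)⟩ z hz,
    mkSpanSingleton'_apply, RingHom.id_apply]

variable {G : Type*} [AddCommGroup G]

def IsNonnegOn (f : G →ₗ.[ℤ] ℝ) (P : AddSubmonoid G) : Prop :=
  ∀ x : f.domain, (x : G) ∈ P → 0 ≤ f x

variable {f : G →ₗ.[ℤ] ℝ} {P : AddSubmonoid G}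

theorem exists_nonneg_extension (y : G) (c : ℝ)
    (hc : ∀ (x : f.domain) (k : ℤ), (x : G) + k • y ∈ P → 0 ≤ f x + k * c) :
    ∃ g : G →ₗ.[ℤ] ℝ, f ≤ g ∧ g.IsNonnegOn P ∧ ∃ hy : y ∈ g.domain, g ⟨y, hy⟩ = c := by
  have hzero : ∀ (x : f.domain) (k : ℤ), (x : G) + k • y = 0 → f x + k • c = 0 := by
    intro x k hxk
    have h₁ := hc x k (hxk ▸ P.zero_mem)
    have h₂ := hc (-x) (-k) (by simp [neg_smul, ← neg_add, hxk])
    rw [map_neg] at h₂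
    push_cast at h₂
    rw [zsmul_eq_mul]
    linarith
  obtain ⟨g, hfg, hdom, hg⟩ := f.exists_extension_sup_span_singleton y c hzero
  have hy : y ∈ g.domain := hdom ▸ mem_sup_right (mem_span_singleton_self y)
  refine ⟨g, hfg, ?_, hy, by simpa using hg 0 1 ⟨y, hy⟩ (by simp)⟩
  rintro ⟨z, hz⟩ hzP
  obtain ⟨x, hx, _, hky, rfl⟩ := mem_sup.1 (hdom ▸ hz)
  obtain ⟨k, rfl⟩ := mem_span_singleton.1 hky
  rw [hg ⟨x, hx⟩ k _ rfl, zsmul_eq_mul]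
  exact hc ⟨x, hx⟩ k hzP

theorem IsNonnegOn.exists_admissible_value (hf : f.IsNonnegOn P)
    (dense : ∀ y, ∃ x : f.domain, (x : G) + y ∈ P) (y : G) :
    ∃ c : ℝ, ∀ (x : f.domain) (k : ℤ), (x : G) + k • y ∈ P → 0 ≤ f x + k * c := by
  set lower := {r | ∃ (x : f.domain) (n : ℕ), 0 < n ∧ (x : G) + n • y ∈ P ∧ r = -f x / n}
  set upper := {r | ∃ (x : f.domain) (n : ℕ), 0 < n ∧ (x : G) - n • y ∈ P ∧ r = f x / n}
  -- `m • (x + n • y) + n • (x' - m • y) = m • x + n • x'` lies in `P ∩ f.domain`.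
  have lower_le_upper : ∀ a ∈ lower, ∀ b ∈ upper, a ≤ b := by
    rintro _ ⟨x, n, hn, hx, rfl⟩ _ ⟨x', m, hm, hx', rfl⟩
    have hsum : (((m : ℤ) • x + (n : ℤ) • x' : f.domain) : G) ∈ P := by
      convert P.add_mem (P.nsmul_mem hx m) (P.nsmul_mem hx' n) using 1
      push_cast
      module
    have := hf _ hsum
    rw [f.map_add, f.map_smul, f.map_smul, zsmul_eq_mul, zsmul_eq_mul] at this
    push_cast at this
    rw [div_le_div_iff₀ (by positivity) (by positivity)]
    linarith
  have lower_nonempty : lower.Nonempty := by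
    obtain ⟨x, hx⟩ := dense y
    exact ⟨_, x, 1, one_pos, by simpa using hx, rfl⟩
  have upper_nonempty : upper.Nonempty := by
    obtain ⟨x, hx⟩ := dense (-y)
    exact ⟨_, x, 1, one_pos, by simpa [sub_eq_add_neg] using hx, rfl⟩
  obtain ⟨c, hc_lower, hc_upper⟩ :=
    exists_between_of_forall_le lower_nonempty upper_nonempty lower_le_upper
  refine ⟨c, fun x k hxk ↦ ?_⟩
  obtain ⟨n, rfl | rfl⟩ := Int.eq_nat_or_neg k
  · rcases Nat.eq_zero_or_pos n with rfl | hn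
    · simpa using hf x (by simpa using hxk)
    · have := hc_lower ⟨x, n, hn, by simpa using hxk, rfl⟩
      rw [div_le_iff₀ (by positivity)] at this
      push_cast
      linarith
  · rcases Nat.eq_zero_or_pos n with rfl | hn
    · simpa using hf x (by simpa using hxk)
    · have := hc_upper ⟨x, n, hn, by simpa [sub_eq_add_neg] using hxk, rfl⟩
      rw [le_div_iff₀ (by positivity)] at this
      push_cast
      linarith

theorem IsNonnegOn.exists_extension_mem_domain (hf : f.IsNonnegOn P)
    (dense : ∀ y, ∃ x : f.domain, (x : G) + y ∈ P) (y : G) :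
    ∃ g : G →ₗ.[ℤ] ℝ, f ≤ g ∧ g.IsNonnegOn P ∧ y ∈ g.domain := by
  obtain ⟨c, hc⟩ := hf.exists_admissible_value dense y
  obtain ⟨g, hfg, hg, hy, -⟩ := exists_nonneg_extension y c hc
  exact ⟨g, hfg, hg, hy⟩

theorem isNonnegOn_sSup {c : Set (G →ₗ.[ℤ] ℝ)} (hc : DirectedOn (· ≤ ·) c)
    (hne : c.Nonempty) (hpos : ∀ g ∈ c, g.IsNonnegOn P) :
    (LinearPMap.sSup c hc).IsNonnegOn P := by
  rintro ⟨x, hx⟩ hxP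
  have hdir : DirectedOn (· ≤ ·) (domain '' c) :=
    directedOn_image.2 (hc.mono domain_mono.monotone)
  obtain ⟨_, ⟨g, hgc, rfl⟩, hgx⟩ := (mem_sSup_of_directed (hne.image _) hdir).1 hx
  rw [← (LinearPMap.le_sSup hc hgc).2 (x := ⟨x, hgx⟩) rfl]
  exact hpos g hgc ⟨x, hgx⟩ hxP

end LinearPMap

open LinearPMap in
theorem riesz_extension_int {G : Type*} [AddCommGroup G] (P : AddSubmonoid G)
    (f : G →ₗ.[ℤ] ℝ) (hf : f.IsNonnegOn P) (dense : ∀ y, ∃ x : f.domain, (x : G) + y ∈ P) :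
    ∃ g : G →+ ℝ, (∀ x : f.domain, g x = f x) ∧ ∀ x ∈ P, 0 ≤ g x := by
  obtain ⟨q, hfq, hq, hq_max⟩ := zorn_le_nonempty₀
    {g : G →ₗ.[ℤ] ℝ | g.IsNonnegOn P}
    (fun c hcS hchain g hg ↦ ⟨_, isNonnegOn_sSup hchain.directedOn ⟨g, hg⟩ hcS,
      fun _ ↦ LinearPMap.le_sSup hchain.directedOn⟩) f hf
  have hq_total : ∀ y, y ∈ q.domain := fun y ↦ by
    obtain ⟨g, hqg, hg, hy⟩ := hq.exists_extension_mem_domain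
      (fun y ↦ let ⟨x, hx⟩ := dense y; ⟨inclusion hfq.1 x, hx⟩) y
    exact (hq_max hg hqg).1 hy
  refine ⟨(q.toFun.comp (LinearMap.id.codRestrict q.domain hq_total)).toAddMonoidHom,
    fun x ↦ (hfq.2 rfl).symm, fun x hx ↦ hq ⟨x, hq_total x⟩ hx⟩

def IsOrderUnit {G : Type*} [AddCommGroup G] (P : Set G) (u : G) : Prop :=
  ∀ g : G, ∃ n : ℕ, n • u - g ∈ P

namespace AddGroupCone

variable {G : Type*} [AddCommGroup G]

def ofSet (P : Set G) (zero_mem : (0 : G) ∈ P) (add_mem : ∀ x ∈ P, ∀ y ∈ P, x + y ∈ P)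
    (pointed : ∀ x ∈ P, -x ∈ P → x = 0) : AddGroupCone G where
  carrier := P
  zero_mem' := zero_mem
  add_mem' hx hy := add_mem _ hx _ hy
  eq_zero_of_mem_of_neg_mem' := pointed _

variable (C : AddGroupCone G) {u : G}

theorem nonneg_of_zsmul_mem (huC : u ∈ C) (hu0 : u ≠ 0) {k : ℤ} (hk : k • u ∈ C) : 0 ≤ k := by
  cases k with
  | ofNat n => exact Int.natCast_nonneg n
  | negSucc n =>
    have hsucc : (n + 1) • u = 0 :=
      eq_zero_of_mem_of_neg_mem (nsmul_mem huC _) (by rwa [negSucc_zsmul] at hk)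
    have hneg : -u = n • u := neg_eq_of_add_eq_zero_left (by rwa [succ_nsmul] at hsucc)
    exact absurd (eq_zero_of_mem_of_neg_mem huC (hneg ▸ nsmul_mem huC n)) hu0

theorem exists_isState (huC : u ∈ C) (hu0 : u ≠ 0) (hu : IsOrderUnit (C : Set G) u) :
    ∃ s : G →+ ℝ, IsState (C : Set G) u s := by
  obtain ⟨f, -, hf, hu_mem, hfu⟩ := LinearPMap.exists_nonneg_extension
    (f := (⊥ : G →ₗ.[ℤ] ℝ)) (P := C.toAddSubmonoid) u 1 fun x k hx ↦ by
      obtain rfl : x = 0 := Subtype.ext ((Submodule.mem_bot ℤ).1 x.2)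
      rw [LinearPMap.map_zero, zero_add, mul_one]
      exact_mod_cast C.nonneg_of_zsmul_mem huC hu0
        (show k • u ∈ C.toAddSubmonoid by simpa using hx)
  have dense : ∀ y, ∃ x : f.domain, (x : G) + y ∈ C := fun y ↦ by
    obtain ⟨n, hn⟩ := hu (-y)
    exact ⟨n • ⟨u, hu_mem⟩, by simpa using hn⟩
  obtain ⟨s, hsf, hs⟩ := riesz_extension_int C.toAddSubmonoid f hf dense
  exact ⟨s, hs, (hsf ⟨u, hu_mem⟩).trans hfu⟩

theorem subsingleton_of_isOrderUnit_zero (h : IsOrderUnit (C : Set G) 0) : Subsingleton G :=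
  subsingleton_of_forall_eq 0 fun g ↦ by
    obtain ⟨_, hg⟩ := h (-g)
    obtain ⟨_, hng⟩ := h g
    exact eq_zero_of_mem_of_neg_mem (by simpa using hg) (by simpa using hng)

theorem exists_isState_or_subsingleton (huC : u ∈ C) (hu : IsOrderUnit (C : Set G) u) :
    (∃ s : G →+ ℝ, IsState (C : Set G) u s) ∨ Subsingleton G := by
  by_cases hu0 : u = 0
  · exact .inr (C.subsingleton_of_isOrderUnit_zero (hu0 ▸ hu))
  · exact .inl (C.exists_isState huC hu0 hu)

end AddGroupCone

section States

variable {G H : Type*} [AddCommGroup G] [AddCommGroup H] {P : Set G} {u : G} {Q : Set H} {v : H}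

theorem IsState.apply_le {s : G →+ ℝ} (hs : IsState P u s) {g : G} {n : ℕ}
    (h : n • u - g ∈ P) : s g ≤ n := by
  have := hs.1 _ h
  rwa [map_sub, map_nsmul, hs.2, nsmul_eq_mul, mul_one, sub_nonneg] at this

theorem IsOrderUnit.exists_abs_state_le (hu : IsOrderUnit P u) (g : G) :
    ∃ M : ℝ, ∀ s : G →+ ℝ, IsState P u s → |s g| ≤ M := by
  obtain ⟨m, hm⟩ := hu g
  obtain ⟨n, hn⟩ := hu (-g)
  refine ⟨m + n, fun s hs ↦ abs_le.2 ⟨?_, ?_⟩⟩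
  · have := hs.apply_le hn
    rw [map_neg] at this
    linarith [(Nat.cast_nonneg m : (0 : ℝ) ≤ m)]
  · linarith [hs.apply_le hm, (Nat.cast_nonneg n : (0 : ℝ) ≤ n)]

@[simp]
theorem tensorState_tmul (s : G →+ ℝ) (t : H →+ ℝ) (g : G) (h : H) :
    tensorState s t (g ⊗ₜ[ℤ] h) = s g * t h := by
  simp [tensorState]

theorem exists_abs_tensorState_le (hu : IsOrderUnit P u) (hv : IsOrderUnit Q v)
    (a : TensorProduct ℤ G H) : ∃ M : ℝ, ∀ (s : G →+ ℝ) (t : H →+ ℝ),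
      IsState P u s → IsState Q v t → |tensorState s t a| ≤ M := by
  induction a using TensorProduct.induction_on with
  | zero => exact ⟨0, fun s t _ _ ↦ by simp⟩
  | tmul g h =>
    obtain ⟨M, hM⟩ := hu.exists_abs_state_le g
    obtain ⟨N, hN⟩ := hv.exists_abs_state_le h
    refine ⟨M * N, fun s t hs ht ↦ ?_⟩
    rw [tensorState_tmul, abs_mul]
    exact mul_le_mul (hM s hs) (hN t ht) (abs_nonneg _) ((abs_nonneg _).trans (hM s hs))
  | add a b iha ihb =>
    obtain ⟨M, hM⟩ := iha
    obtain ⟨N, hN⟩ := ihb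
    exact ⟨M + N, fun s t hs ht ↦ by
      rw [map_add]
      exact (abs_add_le _ _).trans (add_le_add (hM s t hs ht) (hN s t hs ht))⟩

theorem tensorState_nsmul_tmul {s : G →+ ℝ} {t : H →+ ℝ} (hs : IsState P u s)
    (ht : IsState Q v t) (m : ℕ) : tensorState s t (m • (u ⊗ₜ[ℤ] v)) = m := by
  simp [hs.2, ht.2]

theorem nsmul_tmul_mem_tensorCone (m : ℕ) : m • (u ⊗ₜ[ℤ] v) ∈ tensorCone P u Q v := by
  rcases Nat.eq_zero_or_pos m with rfl | hm
  · exact .inl (zero_smul ℕ _)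
  · exact .inr fun s t hs ht ↦ by rw [tensorState_nsmul_tmul hs ht]; exact_mod_cast hm

theorem exists_nsmul_tmul_sub_mem_tensorCone (hu : IsOrderUnit P u) (hv : IsOrderUnit Q v)
    (a : TensorProduct ℤ G H) : ∃ m : ℕ, m • (u ⊗ₜ[ℤ] v) - a ∈ tensorCone P u Q v := by
  obtain ⟨M, hM⟩ := exists_abs_tensorState_le hu hv a
  obtain ⟨m, hm⟩ := exists_nat_gt M
  refine ⟨m, .inr fun s t hs ht ↦ ?_⟩
  rw [map_sub, tensorState_nsmul_tmul hs ht]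
  linarith [le_abs_self (tensorState s t a), hM s t hs ht]

theorem eq_zero_of_mem_tensorCone_of_neg_mem {s : G →+ ℝ} {t : H →+ ℝ} (hs : IsState P u s)
    (ht : IsState Q v t) {a : TensorProduct ℤ G H} (ha : a ∈ tensorCone P u Q v)
    (hna : -a ∈ tensorCone P u Q v) : a = 0 := by
  rcases ha with ha | ha
  · exact ha
  rcases hna with hna | hna
  · exact neg_eq_zero.1 hna
  have := hna s t hs ht
  rw [map_neg] at this
  linarith [ha s t hs ht]

end States

theorem stmt_5_general {G H : Type*} [AddCommGroup G] [AddCommGroup H]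
    (P : Set G) (u : G) (Q : Set H) (v : H)
    (hP0 : (0 : G) ∈ P) (hPadd : ∀ x ∈ P, ∀ y ∈ P, x + y ∈ P)
    (hPpointed : ∀ x ∈ P, -x ∈ P → x = 0)
    (huP : u ∈ P) (hu : ∀ g : G, ∃ n : ℕ, n • u - g ∈ P)
    (hQ0 : (0 : H) ∈ Q) (hQadd : ∀ x ∈ Q, ∀ y ∈ Q, x + y ∈ Q)
    (hQpointed : ∀ x ∈ Q, -x ∈ Q → x = 0)
    (hvQ : v ∈ Q) (hv : ∀ h : H, ∃ n : ℕ, n • v - h ∈ Q) :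
    -- (1) G ⊗ H = (G⊗H)₊ − (G⊗H)₊
    (∀ a : TensorProduct ℤ G H, ∃ x ∈ tensorCone P u Q v, ∃ y ∈ tensorCone P u Q v,
        a = x - y) ∧
    -- (2) (G⊗H)₊ ∩ (−(G⊗H)₊) = {0}
    (∀ a : TensorProduct ℤ G H,
        a ∈ tensorCone P u Q v → -a ∈ tensorCone P u Q v → a = 0) ∧
    -- (3) u ⊗ v is an order unit
    (∀ a : TensorProduct ℤ G H, ∃ m : ℕ, m • (u ⊗ₜ[ℤ] v) - a ∈ tensorCone P u Q v) := by
  refine ⟨fun a ↦ ?_, fun a ha hna ↦ ?_, exists_nsmul_tmul_sub_mem_tensorCone hu hv⟩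
  · obtain ⟨m, hm⟩ := exists_nsmul_tmul_sub_mem_tensorCone hu hv (-a)
    exact ⟨_, hm, _, nsmul_tmul_mem_tensorCone m, by abel⟩
  rcases (AddGroupCone.ofSet P hP0 hPadd hPpointed).exists_isState_or_subsingleton huP hu
    with ⟨s, hs⟩ | _
  · rcases (AddGroupCone.ofSet Q hQ0 hQadd hQpointed).exists_isState_or_subsingleton hvQ hv
      with ⟨t, ht⟩ | _
    · exact eq_zero_of_mem_tensorCone_of_neg_mem hs ht ha hna
    · exact Subsingleton.elim a 0
  · exact Subsingleton.elim a 0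

/-- Let `G` and `H` be simple partially ordered abelian groups with order units `u`, `v`.
Then `(G ⊗ H, (G ⊗ H)₊, u ⊗ v)` is a partially ordered abelian group with order unit
`u ⊗ v`: `G ⊗ H = (G⊗H)₊ − (G⊗H)₊`; `(G⊗H)₊ ∩ (−(G⊗H)₊) = {0}`; and for every
`a ∈ G ⊗ H` there is `m : ℕ` with `m (u⊗v) − a ∈ (G⊗H)₊`. -/
theorem stmt_5 {G H : Type*} [AddCommGroup G] [AddCommGroup H]
    (P : Set G) (u : G) (Q : Set H) (v : H)
    (hP0 : (0 : G) ∈ P) (hPadd : ∀ x ∈ P, ∀ y ∈ P, x + y ∈ P)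
    (hPpointed : ∀ x ∈ P, -x ∈ P → x = 0)
    (huP : u ∈ P) (hu : ∀ g : G, ∃ n : ℕ, n • u - g ∈ P)
    (hQ0 : (0 : H) ∈ Q) (hQadd : ∀ x ∈ Q, ∀ y ∈ Q, x + y ∈ Q)
    (hQpointed : ∀ x ∈ Q, -x ∈ Q → x = 0)
    (hvQ : v ∈ Q) (hv : ∀ h : H, ∃ n : ℕ, n • v - h ∈ Q)
    -- simplicity: every nonzero positive element is an order unit
    (hGsimple : ∀ p ∈ P, p ≠ 0 → ∀ g : G, ∃ n : ℕ, n • p - g ∈ P)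
    (hHsimple : ∀ q ∈ Q, q ≠ 0 → ∀ h : H, ∃ n : ℕ, n • q - h ∈ Q) :
    -- (1) G ⊗ H = (G⊗H)₊ − (G⊗H)₊
    (∀ a : TensorProduct ℤ G H, ∃ x ∈ tensorCone P u Q v, ∃ y ∈ tensorCone P u Q v,
        a = x - y) ∧
    -- (2) (G⊗H)₊ ∩ (−(G⊗H)₊) = {0}
    (∀ a : TensorProduct ℤ G H,
        a ∈ tensorCone P u Q v → -a ∈ tensorCone P u Q v → a = 0) ∧
    -- (3) u ⊗ v is an order unit
    (∀ a : TensorProduct ℤ G H, ∃ m : ℕ, m • (u ⊗ₜ[ℤ] v) - a ∈ tensorCone P u Q v) :=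
  stmt_5_general P u Q v hP0 hPadd hPpointed huP hu hQ0 hQadd hQpointed hvQ hv
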